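/- Let X be a complete separable metric space and Σ a compact Hausdorff topological group with Haar probability measure μ_Σ acting measurably on X. Let f ∈ F_1(a,b) be admissible and let Γ ⊂ C_{b,Σ}^{inv}(X) be admissible. Then for all Σ-invariant probability measures Q, P on X: D_f^Γ(Q‖P) ≥ 0, and D_f^Γ(Q‖P) = 0 whenever Q = P. If moreover f is strictly admissible (i.e. also strictly convex at 1) and Γ is Σ-strictly admissible, then D_f^Γ(Q‖P) = 0 implies Q = P. -/

import Mathlib

open MeasureTheory
open scoped ENNReal

/-- `Mb X`: the set of bounded measurable real-valued functions on `X`. -/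
def Mb (X : Type*) [MeasurableSpace X] : Set (X → ℝ) :=
  {γ | Measurable γ ∧ ∃ C : ℝ, ∀ x, |γ x| ≤ C}

/-- `Cb X`: the set of bounded continuous real-valued functions on `X`. -/
def Cb (X : Type*) [TopologicalSpace X] : Set (X → ℝ) :=
  {γ | Continuous γ ∧ ∃ C : ℝ, ∀ x, |γ x| ≤ C}

/-- The symmetrization operator `S_Σ[γ](x) = ∫_Σ γ(T_σ(x)) dμ_Σ(σ)`. -/
noncomputable def SSigma {X G : Type*} [MeasurableSpace X] [MeasurableSpace G]
    (μ : Measure G) (T : G → X → X) (γ : X → ℝ) : X → ℝ :=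
  fun x => ∫ σ, γ (T σ x) ∂μ

/-- The Legendre transform `f*(y) = sup_{x ∈ ℝ} {yx − f(x)}` of an extended-real-valued
convex function `f`. -/
noncomputable def legendreE (f : ℝ → EReal) (y : ℝ) : EReal :=
  ⨆ x : ℝ, (((y * x : ℝ) : EReal) - f x)

/-- Positive part of an extended real, as an extended nonnegative real. -/
noncomputable def erealToENNReal : EReal → ℝ≥0∞
  | ⊥ => 0
  | ⊤ => ⊤
  | (x : ℝ) => ENNReal.ofReal x

/-- Integral of an extended-real-valued function: difference of the lower integrals of
the positive and negative parts. -/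
noncomputable def eIntegral {X : Type*} [MeasurableSpace X] (P : Measure X)
    (g : X → EReal) : EReal :=
  ((∫⁻ x, erealToENNReal (g x) ∂P : ℝ≥0∞) : EReal)
    - ((∫⁻ x, erealToENNReal (-(g x)) ∂P : ℝ≥0∞) : EReal)

/-- The `f`-divergence `D_f(Q‖P) = sup_{γ ∈ M_b(X)} {E_Q[γ] − E_P[f*(γ)]}`. -/
noncomputable def DfFull {X : Type*} [MeasurableSpace X] (f : ℝ → EReal)
    (Q P : Measure X) : EReal :=
  ⨆ γ ∈ Mb X, (((∫ x, γ x ∂Q : ℝ) : EReal) - eIntegral P fun x => legendreE f (γ x))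

/-- `Λ_f^P[γ] = inf_{ν ∈ ℝ} {ν + E_P[f*(γ − ν)]}`. -/
noncomputable def LambdaE {X : Type*} [MeasurableSpace X] (f : ℝ → EReal) (P : Measure X)
    (γ : X → ℝ) : EReal :=
  ⨅ ν : ℝ, ((ν : EReal) + eIntegral P fun x => legendreE f (γ x - ν))

/-- The `(f,Γ)`-divergence `D_f^Γ(Q‖P) = sup_{γ ∈ Γ} {E_Q[γ] − Λ_f^P[γ]}`. -/
noncomputable def DfGammaE {X : Type*} [MeasurableSpace X] (f : ℝ → EReal)
    (Γ : Set (X → ℝ)) (Q P : Measure X) : EReal :=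
  ⨆ γ ∈ Γ, (((∫ x, γ x ∂Q : ℝ) : EReal) - LambdaE f P γ)

/-- The `Γ`-integral probability metric `W^Γ(Q,P) = sup_{γ ∈ Γ} {E_Q[γ] − E_P[γ]}`. -/
noncomputable def IPM {X : Type*} [MeasurableSpace X] (Γ : Set (X → ℝ))
    (Q P : Measure X) : EReal :=
  ⨆ γ ∈ Γ, (((∫ x, γ x ∂Q) - (∫ x, γ x ∂P) : ℝ) : EReal)

/-- Integration of a real function against a finite signed measure,
`⟨ν, g⟩ = ∫ g dν⁺ − ∫ g dν⁻` (Jordan decomposition). -/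
noncomputable def pairSM {X : Type*} [MeasurableSpace X] (ν : SignedMeasure X)
    (g : X → ℝ) : ℝ :=
  ∫ x, g x ∂ν.toJordanDecomposition.posPart - ∫ x, g x ∂ν.toJordanDecomposition.negPart

/-- The `M(X)`-topology on real-valued functions: the weak topology generated by the
functionals `γ ↦ ∫ γ dν` for finite signed measures `ν`. -/
noncomputable def weakTopFn (X : Type*) [MeasurableSpace X] :
    TopologicalSpace (X → ℝ) :=
  ⨅ ν : SignedMeasure X, TopologicalSpace.induced (pairSM ν) inferInstance


/-! ### Auxiliary lemmas -/

@[simp] lemma erealToENNReal_coe (x : ℝ) : erealToENNReal (x : EReal) = ENNReal.ofReal x := rfl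

lemma erealToENNReal_mono {x y : EReal} (h : x ≤ y) :
    erealToENNReal x ≤ erealToENNReal y := by
  induction x with
  | bot => exact zero_le
  | top => rw [top_le_iff.mp h]
  | coe a =>
    induction y with
    | bot => exact absurd h (by simp)
    | top => exact le_top
    | coe b => exact ENNReal.ofReal_le_ofReal (by exact_mod_cast h)

section eIntegralLemmas

variable {X : Type*} [MeasurableSpace X] {P : Measure X}

lemma lintegral_ofReal_ne_top {r : X → ℝ} (hr : Integrable r P) :
    (∫⁻ x, ENNReal.ofReal (r x) ∂P) ≠ ⊤ := by
  refine ne_top_of_le_ne_top hr.2.ne (lintegral_mono fun x => ?_)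
  exact Real.ofReal_le_enorm (r x)

lemma integral_coe_eq {r : X → ℝ} (hr : Integrable r P) :
    ((∫ x, r x ∂P : ℝ) : EReal)
      = ((∫⁻ x, ENNReal.ofReal (r x) ∂P : ℝ≥0∞) : EReal)
        - ((∫⁻ x, ENNReal.ofReal (-(r x)) ∂P : ℝ≥0∞) : EReal) := by
  have hA := lintegral_ofReal_ne_top hr
  have hB := lintegral_ofReal_ne_top hr.neg
  rw [integral_eq_lintegral_pos_part_sub_lintegral_neg_part hr]
  rw [EReal.coe_sub]
  congr 1
  · rw [← EReal.toReal_coe_ennreal]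
    exact EReal.coe_toReal (by simpa using hA) (by simp)
  · rw [← EReal.toReal_coe_ennreal]
    exact EReal.coe_toReal (by simpa using hB) (by simp)

lemma le_eIntegral {g : X → EReal} {r : X → ℝ} (hr : Integrable r P)
    (h : ∀ x, ((r x : ℝ) : EReal) ≤ g x) :
    ((∫ x, r x ∂P : ℝ) : EReal) ≤ eIntegral P g := by
  rw [integral_coe_eq hr]
  refine EReal.sub_le_sub ?_ ?_
  · rw [EReal.coe_ennreal_le_coe_ennreal_iff]
    refine lintegral_mono fun x => ?_
    simpa using erealToENNReal_mono (h x)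
  · rw [EReal.coe_ennreal_le_coe_ennreal_iff]
    refine lintegral_mono fun x => ?_
    have : -(g x) ≤ ((-(r x) : ℝ) : EReal) := by
      rw [EReal.coe_neg]; exact EReal.neg_le_neg_iff.mpr (h x)
    exact erealToENNReal_mono this

lemma eIntegral_le {g : X → EReal} {r : X → ℝ} (hr : Integrable r P)
    (h : ∀ x, g x ≤ ((r x : ℝ) : EReal)) :
    eIntegral P g ≤ ((∫ x, r x ∂P : ℝ) : EReal) := by
  rw [integral_coe_eq hr]
  refine EReal.sub_le_sub ?_ ?_
  · rw [EReal.coe_ennreal_le_coe_ennreal_iff]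
    refine lintegral_mono fun x => ?_
    simpa using erealToENNReal_mono (h x)
  · rw [EReal.coe_ennreal_le_coe_ennreal_iff]
    refine lintegral_mono fun x => ?_
    have : ((-(r x) : ℝ) : EReal) ≤ -(g x) := by
      rw [EReal.coe_neg]; exact EReal.neg_le_neg_iff.mpr (h x)
    exact erealToENNReal_mono this

lemma eIntegral_const [IsProbabilityMeasure P] (s : ℝ) :
    eIntegral P (fun _ : X => ((s : ℝ) : EReal)) = (s : EReal) := by
  have hint : Integrable (fun _ : X => s) P := integrable_const s
  have hval : (∫ _, s ∂P : ℝ) = s := by simp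
  refine le_antisymm ?_ ?_
  · have h := eIntegral_le (g := fun _ : X => ((s : ℝ) : EReal)) hint (fun _ => le_rfl)
    rwa [hval] at h
  · have h := le_eIntegral (g := fun _ : X => ((s : ℝ) : EReal)) hint (fun _ => le_rfl)
    rwa [hval] at h

end eIntegralLemmas

lemma integrable_of_cb {X : Type*} [MeasurableSpace X] [TopologicalSpace X]
    [OpensMeasurableSpace X] {P : Measure X} [IsFiniteMeasure P] {g : X → ℝ}
    (hg : Continuous g) {C : ℝ} (hC : ∀ x, |g x| ≤ C) : Integrable g P :=
  ⟨hg.aestronglyMeasurable,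
    HasFiniteIntegral.of_bounded (C := C)
      (Filter.Eventually.of_forall fun x => by simpa [Real.norm_eq_abs] using hC x)⟩

lemma legendre_ge (f : ℝ → EReal) (hf1 : f 1 = 0) (y : ℝ) : (y : EReal) ≤ legendreE f y := by
  refine le_iSup_of_le 1 ?_
  simp [hf1]

set_option maxHeartbeats 1000000 in
lemma key_subgradient
    (f : ℝ → EReal) (a b : EReal)
    (ha : a < ((1 : ℝ) : EReal)) (hb : ((1 : ℝ) : EReal) < b)
    (hfbot : ∀ x : ℝ, f x ≠ ⊥)
    (hffin : ∀ x : ℝ, a < (x : EReal) → (x : EReal) < b → f x ≠ ⊤)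
    (hf1 : f 1 = 0)
    (hfconv : ∀ x y t : ℝ, 0 ≤ t → t ≤ 1 →
      f (t * x + (1 - t) * y) ≤ (t : EReal) * f x + ((1 - t : ℝ) : EReal) * f y) :
    ∃ s : ℝ, legendreE f s = ((s : ℝ) : EReal) ∧
      ((∀ x y t : ℝ, 0 < t → t < 1 → x ≠ y → t * x + (1 - t) * y = 1 →
          (0 : EReal) < (t : EReal) * f x + ((1 - t : ℝ) : EReal) * f y) →
        ∃ e : ℝ, (e = 1 ∨ e = -1) ∧
          ∀ δ : ℝ, 0 < δ → ∃ u₁ : ℝ, 0 < u₁ ∧ ∀ u : ℝ, 0 ≤ u → u ≤ u₁ →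
            legendreE f (s + e * u) ≤ ((s + e * u + δ * u : ℝ) : EReal)) := by
  -- real points around 1
  obtain ⟨u₀, hau₀, hu₀1⟩ := EReal.exists_between_coe_real ha
  obtain ⟨v₀, h1v₀, hv₀b⟩ := EReal.exists_between_coe_real hb
  rw [EReal.coe_lt_coe_iff] at hu₀1 h1v₀
  -- finiteness
  have fin : ∀ x : ℝ, u₀ ≤ x → x ≤ v₀ → ∃ p : ℝ, f x = (p : EReal) := by
    intro x h1 h2
    cases h : f x with
    | bot => exact absurd h (hfbot x)
    | coe q => exact ⟨q, rfl⟩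
    | top =>
      refine absurd h (hffin x ?_ ?_)
      · exact lt_of_lt_of_le hau₀ (by exact_mod_cast h1)
      · exact lt_of_le_of_lt (by exact_mod_cast h2) hv₀b
  -- real convexity consequence
  have hconvR : ∀ x y t px py pz : ℝ, 0 ≤ t → t ≤ 1 → f x = (px : EReal) →
      f y = (py : EReal) → f (t * x + (1 - t) * y) = (pz : EReal) →
      pz ≤ t * px + (1 - t) * py := by
    intro x y t px py pz ht ht1 hx hy hz
    have := hfconv x y t ht ht1
    rw [hx, hy, hz, ← EReal.coe_mul, ← EReal.coe_mul, ← EReal.coe_add] at this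
    exact_mod_cast this
  -- three-chord inequality through 1 (product form):
  -- u < 1 < v, f u = pu, f v = pv  ⟹  0 ≤ (v-1)*pu + (1-u)*pv
  have c3 : ∀ u v pu pv : ℝ, u < 1 → 1 < v → f u = (pu : EReal) → f v = (pv : EReal) →
      0 ≤ (v - 1) * pu + (1 - u) * pv := by
    intro u v pu pv hu hv hfu hfv
    set t : ℝ := (v - 1) / (v - u) with htdef
    have huv : 0 < v - u := by linarith
    have ht : 0 ≤ t := div_nonneg (by linarith) (le_of_lt huv)
    have ht1 : t ≤ 1 := by
      rw [div_le_one huv]; linarith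
    have hcomb : t * u + (1 - t) * v = 1 := by
      have htm : t * (v - u) = v - 1 := by rw [htdef]; exact div_mul_cancel₀ _ huv.ne'
      linear_combination -htm
    have h0 : (0 : ℝ) ≤ t * pu + (1 - t) * pv := by
      have h := hconvR u v t pu pv 0 ht ht1 hfu hfv (by rw [hcomb, hf1, EReal.coe_zero])
      linarith
    have h1t : 1 - t = (1 - u) / (v - u) := by
      rw [htdef]
      field_simp
      ring
    have := mul_le_mul_of_nonneg_left h0 (le_of_lt huv)
    calc (0:ℝ) = (v - u) * 0 := by ring
    _ ≤ (v - u) * (t * pu + (1 - t) * pv) := this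
    _ = (v - 1) * pu + (1 - u) * pv := by
        rw [h1t, htdef]; field_simp
  -- right chord monotonicity (product form)
  have cR : ∀ w v pw pv : ℝ, 1 < w → w < v → f w = (pw : EReal) → f v = (pv : EReal) →
      pw * (v - 1) ≤ pv * (w - 1) := by
    intro w v pw pv hw hwv hfw hfv
    set t : ℝ := (w - 1) / (v - 1) with htdef
    have hv1 : (0:ℝ) < v - 1 := by linarith
    have ht : 0 ≤ t := div_nonneg (by linarith) (le_of_lt hv1)
    have ht1 : t ≤ 1 := by rw [div_le_one hv1]; linarith
    have hcomb : t * v + (1 - t) * 1 = w := by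
      rw [htdef]; field_simp; ring
    have h := hconvR v 1 t pv 0 pw ht ht1 hfv (by rw [hf1, EReal.coe_zero])
      (by rw [hcomb, hfw])
    have h2 : pw ≤ t * pv := by linarith
    have := mul_le_mul_of_nonneg_right h2 (le_of_lt hv1)
    calc pw * (v - 1) ≤ t * pv * (v - 1) := this
    _ = pv * (w - 1) := by rw [htdef]; field_simp
  -- left chord monotonicity (product form)
  have cL : ∀ u w pu pw : ℝ, u < w → w < 1 → f u = (pu : EReal) → f w = (pw : EReal) →
      pw * (1 - u) ≤ pu * (1 - w) := by
    intro u w pu pw huw hw hfu hfw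
    set t : ℝ := (1 - w) / (1 - u) with htdef
    have hu1 : (0:ℝ) < 1 - u := by linarith
    have ht : 0 ≤ t := div_nonneg (by linarith) (le_of_lt hu1)
    have ht1 : t ≤ 1 := by rw [div_le_one hu1]; linarith
    have hcomb : t * u + (1 - t) * 1 = w := by
      rw [htdef]; field_simp; ring
    have h := hconvR u 1 t pu 0 pw ht ht1 hfu (by rw [hf1, EReal.coe_zero])
      (by rw [hcomb, hfw])
    have h2 : pw ≤ t * pu := by linarith
    have := mul_le_mul_of_nonneg_right h2 (le_of_lt hu1)
    calc pw * (1 - u) ≤ t * pu * (1 - u) := this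
    _ = pu * (1 - w) := by rw [htdef]; field_simp
  -- slope sets
  obtain ⟨pu₀, hpu₀⟩ := fin u₀ le_rfl (by linarith)
  obtain ⟨pv₀, hpv₀⟩ := fin v₀ (by linarith) le_rfl
  set sl : ℝ → ℝ := fun x => (f x).toReal / (x - 1) with hsl
  have slval : ∀ x p : ℝ, f x = (p : EReal) → sl x = p / (x - 1) := by
    intro x p hx
    rw [hsl]; simp [hx]
  set L : Set ℝ := sl '' Set.Ico u₀ 1 with hLdef
  set R : Set ℝ := sl '' Set.Ioc 1 v₀ with hRdef
  have hu₀L : sl u₀ ∈ L := ⟨u₀, ⟨le_rfl, hu₀1⟩, rfl⟩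
  have hv₀R : sl v₀ ∈ R := ⟨v₀, ⟨h1v₀, le_rfl⟩, rfl⟩
  have hLR : ∀ l ∈ L, ∀ r ∈ R, l ≤ r := by
    rintro l ⟨u, ⟨huu₀, hu1⟩, rfl⟩ r ⟨v, ⟨h1v, hvv₀⟩, rfl⟩
    obtain ⟨pu, hpu⟩ := fin u huu₀ (by linarith)
    obtain ⟨pv, hpv⟩ := fin v (by linarith) hvv₀
    rw [slval u pu hpu, slval v pv hpv]
    have h1u : (0:ℝ) < 1 - u := by linarith
    have hv1 : (0:ℝ) < v - 1 := by linarith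
    have hc := c3 u v pu pv hu1 h1v hpu hpv
    have h2 : (-pu) / (1 - u) ≤ pv / (v - 1) :=
      (div_le_div_iff₀ h1u hv1).mpr (by nlinarith)
    calc pu / (u - 1) = (-pu) / (1 - u) := by
          rw [show u - 1 = -(1 - u) by ring, div_neg, neg_div]
    _ ≤ pv / (v - 1) := h2
  have hLbdd : BddAbove L := ⟨sl v₀, fun l hl => hLR l hl _ hv₀R⟩
  have hRbdd : BddBelow R := ⟨sl u₀, fun r hr => hLR _ hu₀L r hr⟩
  set sm : ℝ := sSup L with hsm
  set sp : ℝ := sInf R with hsp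
  have hsmsp : sm ≤ sp :=
    csSup_le ⟨_, hu₀L⟩ fun l hl => le_csInf ⟨_, hv₀R⟩ fun r hr => hLR l hl r hr
  set s : ℝ := (sm + sp) / 2 with hs
  have hsms : sm ≤ s := by rw [hs]; linarith
  have hssp : s ≤ sp := by rw [hs]; linarith
  -- lower bounds
  have hlowR : ∀ v q : ℝ, 1 < v → f v = (q : EReal) → sp * (v - 1) ≤ q := by
    intro v q h1v hfv
    have hv1 : (0:ℝ) < v - 1 := by linarith
    rcases le_or_gt v v₀ with hvv₀ | hv₀v
    · have hmem : sl v ∈ R := ⟨v, ⟨h1v, hvv₀⟩, rfl⟩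
      have := csInf_le hRbdd hmem
      rw [slval v q hfv] at this
      rw [← hsp] at this
      exact (le_div_iff₀ hv1).mp this
    · have hc := cR v₀ v pv₀ q h1v₀ hv₀v hpv₀ hfv
      have hv₀1 : (0:ℝ) < v₀ - 1 := by linarith
      have h1 : sp ≤ pv₀ / (v₀ - 1) := by
        have := csInf_le hRbdd hv₀R
        rwa [slval v₀ pv₀ hpv₀] at this
      have h2 : pv₀ / (v₀ - 1) ≤ q / (v - 1) :=
        (div_le_div_iff₀ hv₀1 hv1).mpr (by nlinarith)
      exact (le_div_iff₀ hv1).mp (h1.trans h2)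
  have hlowL : ∀ u q : ℝ, u < 1 → f u = (q : EReal) → sm * (u - 1) ≤ q := by
    intro u q hu1 hfu
    have h1u : (0:ℝ) < 1 - u := by linarith
    have hu1' : u - 1 < 0 := by linarith
    rcases le_or_gt u₀ u with huu₀ | huu₀
    · have hmem : sl u ∈ L := ⟨u, ⟨huu₀, hu1⟩, rfl⟩
      have := le_csSup hLbdd hmem
      rw [slval u q hfu] at this
      rw [← hsm] at this
      exact (div_le_iff_of_neg hu1').mp this
    · have hc := cL u u₀ q pu₀ huu₀ hu₀1 hfu hpu₀
      have h1u₀ : (0:ℝ) < 1 - u₀ := by linarith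
      have h1 : pu₀ / (u₀ - 1) ≤ sm := by
        have := le_csSup hLbdd hu₀L
        rwa [slval u₀ pu₀ hpu₀] at this
      have h2 : q / (u - 1) ≤ pu₀ / (u₀ - 1) := by
        rw [show u - 1 = -(1 - u) by ring, show u₀ - 1 = -(1 - u₀) by ring,
          div_neg, div_neg, neg_le_neg_iff]
        exact (div_le_div_iff₀ h1u₀ h1u).mpr (by nlinarith)
      exact (div_le_iff_of_neg hu1').mp (h2.trans h1)
  have hlow : ∀ x q : ℝ, f x = (q : EReal) → s * (x - 1) ≤ q := by
    intro x q hfx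
    rcases lt_trichotomy x 1 with hx1 | hx1 | hx1
    · have := hlowL x q hx1 hfx
      nlinarith
    · subst hx1
      rw [hf1] at hfx
      have : (0:ℝ) = q := by exact_mod_cast hfx
      simp [← this]
    · have := hlowR x q hx1 hfx
      nlinarith
  refine ⟨s, ?_, ?_⟩
  · -- legendreE f s = s
    refine le_antisymm (iSup_le fun x => ?_) ?_
    · cases hfx : f x with
      | bot => exact absurd hfx (hfbot x)
      | top => rw [EReal.sub_top]; exact bot_le
      | coe q =>
        rw [← EReal.coe_sub, EReal.coe_le_coe_iff]
        have := hlow x q hfx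
        nlinarith
    · refine le_iSup_of_le 1 ?_
      rw [hf1, mul_one]
      simp
  · intro hstrict
    by_cases hL : ∀ x : ℝ, x < 1 → ∀ q : ℝ, f x = (q : EReal) → s * (x - 1) < q
    · -- no contact on the left: left-sided estimate, e = -1
      refine ⟨-1, Or.inr rfl, ?_⟩
      intro δ hδ
      set η : ℝ := min δ (1 - u₀) with hηdef
      have hη0 : 0 < η := lt_min hδ (by linarith)
      have hηδ : η ≤ δ := min_le_left _ _
      have hηu₀ : η ≤ 1 - u₀ := min_le_right _ _
      set x₁ : ℝ := 1 - η with hx₁def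
      obtain ⟨p₁, hp₁⟩ := fin x₁ (by rw [hx₁def]; linarith) (by rw [hx₁def]; nlinarith)
      have hφ : 0 < p₁ + s * η := by
        have := hL x₁ (by rw [hx₁def]; linarith) p₁ hp₁
        rw [hx₁def] at this; nlinarith
      refine ⟨(p₁ + s * η) / η, by positivity, ?_⟩
      intro u hu0 huu₁
      have huη : u * η ≤ p₁ + s * η := (le_div_iff₀ hη0).mp huu₁
      refine iSup_le fun x => ?_
      cases hfx : f x with
      | bot => exact absurd hfx (hfbot x)
      | top => rw [EReal.sub_top]; exact bot_le
      | coe q =>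
        rw [← EReal.coe_sub, EReal.coe_le_coe_iff]
        have hδu : 0 ≤ δ * u := mul_nonneg (le_of_lt hδ) hu0
        rcases le_or_gt 1 x with hx1 | hx1
        · have := hlow x q hfx
          nlinarith [mul_nonneg hu0 (by linarith : (0:ℝ) ≤ x - 1)]
        rcases le_or_gt x₁ x with hx₁x | hx₁x
        · have := hlow x q hfx
          have h1x : 1 - x ≤ η := by rw [hx₁def] at hx₁x; linarith
          nlinarith [mul_le_mul_of_nonneg_left (h1x.trans hηδ) hu0]
        · have hc := cL x x₁ q p₁ hx₁x (by rw [hx₁def]; linarith) hfx hp₁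
          have h1x₁ : 1 - x₁ = η := by rw [hx₁def]; ring
          rw [h1x₁] at hc
          have h1x : 0 < 1 - x := by rw [hx₁def] at hx₁x; linarith
          nlinarith [mul_le_mul_of_nonneg_right huη (le_of_lt h1x)]
    · -- contact on the left: no contact on the right, e = 1
      push_neg at hL
      obtain ⟨xb, hxb1, qb, hfxb, hqb⟩ := hL
      have hqbeq : qb = s * (xb - 1) := le_antisymm hqb (hlow xb qb hfxb)
      have hR : ∀ v q' : ℝ, 1 < v → f v = (q' : EReal) → s * (v - 1) < q' := by
        intro v q' h1v hfv
        rcases lt_or_eq_of_le (hlow v q' hfv) with h | h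
        · exact h
        · exfalso
          set t : ℝ := (v - 1) / (v - xb) with htdef
          have hvxb : 0 < v - xb := by linarith
          have ht0 : 0 < t := div_pos (by linarith) hvxb
          have ht1 : t < 1 := by rw [div_lt_one hvxb]; linarith
          have hcomb : t * xb + (1 - t) * v = 1 := by
            rw [htdef]; field_simp; ring
          have hne : xb ≠ v := by linarith
          have h0 := hstrict xb v t ht0 ht1 hne hcomb
          rw [hfxb, hfv, ← EReal.coe_mul, ← EReal.coe_mul, ← EReal.coe_add] at h0
          have h0' : (0:ℝ) < t * qb + (1 - t) * q' := by exact_mod_cast h0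
          have hzero : t * qb + (1 - t) * q' = 0 := by
            rw [hqbeq, ← h]
            have : t * (s * (xb - 1)) + (1 - t) * (s * (v - 1))
                = s * ((t * xb + (1 - t) * v) - 1) := by ring
            rw [this, hcomb]; ring
          linarith
      refine ⟨1, Or.inl rfl, ?_⟩
      intro δ hδ
      set η : ℝ := min δ (v₀ - 1) with hηdef
      have hη0 : 0 < η := lt_min hδ (by linarith)
      have hηδ : η ≤ δ := min_le_left _ _
      have hηv₀ : η ≤ v₀ - 1 := min_le_right _ _
      set x₁ : ℝ := 1 + η with hx₁def
      obtain ⟨p₁, hp₁⟩ := fin x₁ (by rw [hx₁def]; nlinarith) (by rw [hx₁def]; linarith)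
      have hφ : 0 < p₁ - s * η := by
        have := hR x₁ p₁ (by rw [hx₁def]; linarith) hp₁
        rw [hx₁def] at this; nlinarith
      refine ⟨(p₁ - s * η) / η, by positivity, ?_⟩
      intro u hu0 huu₁
      have huη : u * η ≤ p₁ - s * η := (le_div_iff₀ hη0).mp huu₁
      refine iSup_le fun x => ?_
      cases hfx : f x with
      | bot => exact absurd hfx (hfbot x)
      | top => rw [EReal.sub_top]; exact bot_le
      | coe q =>
        rw [← EReal.coe_sub, EReal.coe_le_coe_iff]
        have hδu : 0 ≤ δ * u := mul_nonneg (le_of_lt hδ) hu0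
        rcases le_or_gt x 1 with hx1 | hx1
        · have := hlow x q hfx
          nlinarith [mul_nonneg hu0 (by linarith : (0:ℝ) ≤ 1 - x)]
        rcases le_or_gt x x₁ with hxx₁ | hxx₁
        · have := hlow x q hfx
          have hx1' : x - 1 ≤ η := by rw [hx₁def] at hxx₁; linarith
          nlinarith [mul_le_mul_of_nonneg_left (hx1'.trans hηδ) hu0]
        · have hc := cR x₁ x p₁ q (by rw [hx₁def]; linarith) hxx₁ hp₁ hfx
          have hx₁1 : x₁ - 1 = η := by rw [hx₁def]; ring
          rw [hx₁1] at hc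
          have hx1' : 0 < x - 1 := by linarith
          nlinarith [mul_le_mul_of_nonneg_right huη (le_of_lt hx1')]

/-- `P_Σ(X)`-divergence property for `D_f^Γ`: for admissible `f` and
admissible `Γ ⊆ C_{b,Σ}^{inv}(X)` and `Σ`-invariant probability measures `Q, P`:
`D_f^Γ(Q‖P) ≥ 0`, with `D_f^Γ(Q‖P) = 0` when `Q = P`; and if `f` is strictly admissible
(also strictly convex at `1`) and `Γ` is `Σ`-strictly admissible, then
`D_f^Γ(Q‖P) = 0` implies `Q = P`. -/
theorem fGamma_divergence_property_invariant
    {X : Type*} [MetricSpace X] [CompleteSpace X] [TopologicalSpace.SeparableSpace X]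
    [MeasurableSpace X] [BorelSpace X]
    {G : Type*} [Group G] [TopologicalSpace G] [IsTopologicalGroup G]
    [CompactSpace G] [T2Space G] [MeasurableSpace G] [BorelSpace G]
    (μ : Measure G) [IsProbabilityMeasure μ]
    (hμl : ∀ σ : G, Measure.map (fun τ => σ * τ) μ = μ)
    (hμr : ∀ σ : G, Measure.map (fun τ => τ * σ) μ = μ)
    (T : G → X → X)
    (hT : Measurable fun p : G × X => T p.1 p.2)
    (hT1 : T 1 = id)
    (hTmul : ∀ σ₁ σ₂ : G, T σ₁ ∘ T σ₂ = T (σ₁ * σ₂))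
    -- `f ∈ F_1(a,b)`: convex lower semicontinuous extension with `f(1) = 0`,
    -- finite on `(a,b)`, infinite outside `[a,b]`
    (f : ℝ → EReal) (a b : EReal)
    (ha : a < ((1 : ℝ) : EReal)) (hb : ((1 : ℝ) : EReal) < b)
    (hfbot : ∀ x : ℝ, f x ≠ ⊥)
    (hffin : ∀ x : ℝ, a < (x : EReal) → (x : EReal) < b → f x ≠ ⊤)
    (hftop : ∀ x : ℝ, ((x : EReal) < a ∨ b < (x : EReal)) → f x = ⊤)
    (hf1 : f 1 = 0)
    (hfconv : ∀ x y t : ℝ, 0 ≤ t → t ≤ 1 →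
      f (t * x + (1 - t) * y) ≤ (t : EReal) * f x + ((1 - t : ℝ) : EReal) * f y)
    (hflsc : LowerSemicontinuous f)
    -- admissibility of `f`: `{f* < ∞} = ℝ` and `lim_{y→−∞} f*(y) < ∞`
    (hfstar : ∀ y : ℝ, legendreE f y ≠ ⊤)
    (hfstarlim : ∃ L : EReal, L < ⊤ ∧ Filter.Tendsto (legendreE f) Filter.atBot (nhds L))
    -- `Γ ⊆ C_{b,Σ}^{inv}(X)` admissible: `0 ∈ Γ`, convex, closed in the `M(X)`-topology
    (Γ : Set (X → ℝ)) (hΓCb : Γ ⊆ Cb X)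
    (hΓinv : ∀ γ ∈ Γ, ∀ σ : G, γ ∘ T σ = γ)
    (hΓ0 : (fun _ => (0 : ℝ)) ∈ Γ)
    (hΓconv : Convex ℝ Γ)
    (hΓclosed : @IsClosed {g : X → ℝ // g ∈ Cb X}
      (TopologicalSpace.induced (Subtype.val : {g : X → ℝ // g ∈ Cb X} → (X → ℝ))
        (weakTopFn X))
      {g : {g : X → ℝ // g ∈ Cb X} | (g : X → ℝ) ∈ Γ})
    (Q P : Measure X) [IsProbabilityMeasure Q] [IsProbabilityMeasure P]
    (hQinv : ∀ σ : G, Measure.map (T σ) Q = Q)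
    (hPinv : ∀ σ : G, Measure.map (T σ) P = P) :
    (0 : EReal) ≤ DfGammaE f Γ Q P ∧
    (Q = P → DfGammaE f Γ Q P = 0) ∧
    -- strict admissibility of `f` (strict convexity at `1`) and `Σ`-strict
    -- admissibility of `Γ` give the full divergence property
    ((∀ x y t : ℝ, 0 < t → t < 1 → x ≠ y → t * x + (1 - t) * y = 1 →
        (0 : EReal) < (t : EReal) * f x + ((1 - t : ℝ) : EReal) * f y) →
      (∃ Ψ : Set (X → ℝ), Ψ ⊆ Cb X ∧
        (∀ Q' P' : Measure X,
          (IsProbabilityMeasure Q' ∧ ∀ σ : G, Measure.map (T σ) Q' = Q') →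
          (IsProbabilityMeasure P' ∧ ∀ σ : G, Measure.map (T σ) P' = P') →
          (∀ ψ ∈ Ψ, ∫ x, ψ x ∂Q' = ∫ x, ψ x ∂P') → Q' = P') ∧
        (∀ ψ ∈ Ψ, ∃ c ε : ℝ, 0 < ε ∧
          (fun x => c + ε * ψ x) ∈ Γ ∧ (fun x => c - ε * ψ x) ∈ Γ)) →
      DfGammaE f Γ Q P = 0 → Q = P) := by
  classical
  obtain ⟨s, hs_eq, hs_strict⟩ := key_subgradient f a b ha hb hfbot hffin hf1 hfconv
  have hfge : ∀ y : ℝ, (y : EReal) ≤ legendreE f y := legendre_ge f hf1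
  -- Λ_f^P[0] ≤ 0 via ν = -s
  have hΛ0 : LambdaE f P (fun _ : X => (0 : ℝ)) ≤ 0 := by
    refine iInf_le_of_le (-s) ?_
    have hconst : (fun x : X => legendreE f ((fun _ : X => (0 : ℝ)) x - (-s)))
        = fun _ : X => ((s : ℝ) : EReal) := by
      funext x
      have h0 : (fun _ : X => (0 : ℝ)) x - (-s) = s := by simp
      rw [h0, hs_eq]
    rw [hconst, eIntegral_const, ← EReal.coe_add]
    norm_num
  have hpos : (0 : EReal) ≤ DfGammaE f Γ Q P := by
    simp only [DfGammaE]
    refine le_iSup₂_of_le (fun _ : X => (0 : ℝ)) hΓ0 ?_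
    have hz : (∫ x, (fun _ : X => (0 : ℝ)) x ∂Q) = 0 := by simp
    rw [hz]
    calc (0 : EReal) = ((0 : ℝ) : EReal) - 0 := by simp
    _ ≤ ((0 : ℝ) : EReal) - LambdaE f P (fun _ : X => (0 : ℝ)) :=
        EReal.sub_le_sub le_rfl hΛ0
  refine ⟨hpos, ?_, ?_⟩
  · rintro rfl
    refine le_antisymm ?_ hpos
    simp only [DfGammaE]
    refine iSup₂_le fun γ hγ => ?_
    obtain ⟨hγc, Cγ, hCγ⟩ := hΓCb hγ
    have hγint : Integrable γ Q := integrable_of_cb hγc hCγ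
    refine EReal.sub_le_of_le_add ?_
    rw [zero_add]
    refine le_iInf fun ν => ?_
    have hsub : Integrable (fun x => γ x - ν) Q := hγint.sub (integrable_const ν)
    have h1 : ((∫ x, (γ x - ν) ∂Q : ℝ) : EReal) ≤ eIntegral Q fun x => legendreE f (γ x - ν) :=
      le_eIntegral hsub fun x => hfge (γ x - ν)
    have h2 : (∫ x, (γ x - ν) ∂Q : ℝ) = (∫ x, γ x ∂Q) - ν := by
      rw [integral_sub hγint (integrable_const ν)]; simp
    rw [h2] at h1
    calc ((∫ x, γ x ∂Q : ℝ) : EReal) = (ν : EReal) + ((∫ x, γ x ∂Q) - ν : ℝ) := by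
          rw [← EReal.coe_add]; norm_num
    _ ≤ (ν : EReal) + eIntegral Q fun x => legendreE f (γ x - ν) := add_le_add_right h1 _
  · intro hstrict hΨex hD0
    obtain ⟨Ψ, hΨCb, hdet, hΨΓ⟩ := hΨex
    obtain ⟨e, he, hest⟩ := hs_strict hstrict
    have he2 : e * e = 1 := by rcases he with rfl | rfl <;> norm_num
    have hterm : ∀ γ ∈ Γ, ((∫ x, γ x ∂Q : ℝ) : EReal) ≤ LambdaE f P γ := by
      intro γ hγ
      have h : (((∫ x, γ x ∂Q : ℝ) : EReal) - LambdaE f P γ) ≤ DfGammaE f Γ Q P :=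
        le_iSup₂ (f := fun γ (_ : γ ∈ Γ) =>
          (((∫ x, γ x ∂Q : ℝ) : EReal) - LambdaE f P γ)) γ hγ
      rw [hD0] at h
      have h' := (EReal.sub_le_iff_le_add (a := ((∫ x, γ x ∂Q : ℝ) : EReal))
        (b := LambdaE f P γ) (c := 0) (Or.inr (by simp)) (Or.inr (by simp))).mp h
      rwa [zero_add] at h'
    have hmain : ∀ (ψ' : X → ℝ) (c ε C : ℝ), 0 < ε → 0 < C → Continuous ψ' →
        (∀ x, |ψ' x| ≤ C) → (fun x => c + ε * ψ' x) ∈ Γ →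
        ∫ x, ψ' x ∂Q ≤ ∫ x, ψ' x ∂P := by
      intro ψ' c ε C hε hC hψ'c hψ'b hγΓ
      have hψ'Q : Integrable ψ' Q := integrable_of_cb hψ'c hψ'b
      have hψ'P : Integrable ψ' P := integrable_of_cb hψ'c hψ'b
      have hEPabs : |∫ x, ψ' x ∂P| ≤ C := by
        calc |∫ x, ψ' x ∂P| ≤ ∫ x, |ψ' x| ∂P := by
              simpa [Real.norm_eq_abs] using norm_integral_le_integral_norm (f := ψ') (μ := P)
        _ ≤ ∫ _, C ∂P := integral_mono hψ'P.abs (integrable_const C) fun x => hψ'b x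
        _ = C := by simp
      obtain ⟨hEP1, hEP2⟩ := abs_le.mp hEPabs
      have heEP : e * (∫ x, ψ' x ∂P) ≤ C := by
        rcases he with rfl | rfl
        · nlinarith
        · nlinarith
      refine le_of_forall_pos_le_add fun δ' hδ' => ?_
      set δ : ℝ := δ' / (2 * C) with hδdef
      have hδ : 0 < δ := by positivity
      obtain ⟨u₁, hu₁, hest'⟩ := hest δ hδ
      set l : ℝ := min 1 (u₁ / (2 * ε * C)) with hldef
      have hl0 : 0 < l := lt_min one_pos (by positivity)
      have hl1 : l ≤ 1 := min_le_left _ _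
      have hl2 : l * (2 * ε * C) ≤ u₁ := (le_div_iff₀ (by positivity)).mp (min_le_right _ _)
      set γl : X → ℝ := fun x => l * (c + ε * ψ' x) with hγldef
      have hγlΓ : γl ∈ Γ := by
        have h := hΓconv hγΓ hΓ0 hl0.le (by linarith : (0:ℝ) ≤ 1 - l) (by ring)
        have heq : l • (fun x => c + ε * ψ' x) + (1 - l) • (fun _ : X => (0 : ℝ)) = γl := by
          funext x; simp [hγldef, smul_eq_mul]
        rwa [heq] at h
      set ν : ℝ := l * c - l * ε * e * C - s with hνdef
      set K : ℝ := (e + δ) * (l * ε) with hKdef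
      set r : X → ℝ := fun x => K * (e * ψ' x + C) + s with hrdef
      have hrint : Integrable r P := by
        have h1 : Integrable (fun x => e * ψ' x + C) P := (hψ'P.const_mul e).add (integrable_const C)
        exact (h1.const_mul K).add (integrable_const s)
      have hpt : ∀ x, legendreE f (γl x - ν) ≤ ((r x : ℝ) : EReal) := by
        intro x
        obtain ⟨hb1, hb2⟩ := abs_le.mp (hψ'b x)
        have heb : e * ψ' x ≤ C ∧ -C ≤ e * ψ' x := by
          rcases he with rfl | rfl <;> constructor <;> nlinarith
        set u : ℝ := l * ε * (e * ψ' x + C) with hudef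
        have hu0 : 0 ≤ u := mul_nonneg (mul_nonneg hl0.le hε.le) (by linarith [heb.2])
        have huu₁ : u ≤ u₁ := by
          have h9 : l * ε * (e * ψ' x + C) ≤ l * ε * (2 * C) :=
            mul_le_mul_of_nonneg_left (by linarith [heb.1]) (mul_nonneg hl0.le hε.le)
          have h10 : l * ε * (2 * C) = l * (2 * ε * C) := by ring
          rw [hudef]; linarith [hl2, h10 ▸ h9]
        have harg : γl x - ν = s + e * u := by
          rw [hγldef, hνdef, hudef]
          linear_combination (-(l * ε * ψ' x)) * he2
        have hre : (s + e * u + δ * u : ℝ) = r x := by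
          simp only [hudef, hrdef, hKdef]
          ring
        rw [harg]
        have h := hest' u hu0 huu₁
        rwa [hre] at h
      have h2 : LambdaE f P γl ≤ (ν : EReal) + eIntegral P (fun x => legendreE f (γl x - ν)) :=
        iInf_le _ ν
      have h3 := eIntegral_le hrint hpt
      have h4 := (hterm γl hγlΓ).trans (h2.trans (add_le_add_right h3 _))
      rw [← EReal.coe_add, EReal.coe_le_coe_iff] at h4
      have h5 : (∫ x, γl x ∂Q : ℝ) = l * (c + ε * ∫ x, ψ' x ∂Q) := by
        simp only [hγldef]
        rw [MeasureTheory.integral_const_mul,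
          integral_add (integrable_const c) (hψ'Q.const_mul ε),
          MeasureTheory.integral_const_mul]
        simp
      have h6 : (∫ x, r x ∂P : ℝ) = K * (e * (∫ x, ψ' x ∂P) + C) + s := by
        simp only [hrdef]
        have hint2 : Integrable (fun x => e * ψ' x) P := hψ'P.const_mul e
        have hint1 : Integrable (fun x => K * (e * ψ' x + C)) P :=
          (hint2.add (integrable_const C)).const_mul K
        rw [integral_add hint1 (integrable_const s),
          MeasureTheory.integral_const_mul,
          integral_add hint2 (integrable_const C),
          MeasureTheory.integral_const_mul]
        simp
      rw [h5, h6] at h4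
      have he2' : l * ε * ((e * e) * (∫ x, ψ' x ∂P)) = l * ε * (∫ x, ψ' x ∂P) := by
        rw [he2]; ring
      have hprod : 0 ≤ (δ * (l * ε)) * (C - e * (∫ x, ψ' x ∂P)) :=
        mul_nonneg (by positivity) (by linarith)
      have h7 : l * ε * (∫ x, ψ' x ∂Q) ≤ l * ε * ((∫ x, ψ' x ∂P) + δ * (2 * C)) := by
        nlinarith [h4, he2', hprod, mul_pos hl0 hε]
      have h8 : (∫ x, ψ' x ∂Q) ≤ (∫ x, ψ' x ∂P) + δ * (2 * C) :=
        le_of_mul_le_mul_left h7 (mul_pos hl0 hε)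
      have h9 : δ * (2 * C) = δ' := by
        rw [hδdef]; field_simp
      linarith [h8]
    refine hdet Q P ⟨inferInstance, hQinv⟩ ⟨inferInstance, hPinv⟩ fun ψ hψ => ?_
    obtain ⟨c, ε, hε, hγ₁, hγ₂⟩ := hΨΓ ψ hψ
    obtain ⟨hψc, C₀, hC₀⟩ := hΨCb hψ
    set C : ℝ := max C₀ 0 + 1 with hCdef
    have hC : 0 < C := by positivity
    have hψb : ∀ x, |ψ x| ≤ C := fun x => (hC₀ x).trans (by rw [hCdef]; nlinarith [le_max_left C₀ (0:ℝ)])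
    have hle : ∫ x, ψ x ∂Q ≤ ∫ x, ψ x ∂P := hmain ψ c ε C hε hC hψc hψb hγ₁
    have hge : ∫ x, (fun y => -ψ y) x ∂Q ≤ ∫ x, (fun y => -ψ y) x ∂P := by
      refine hmain (fun y => -ψ y) c ε C hε hC hψc.neg (fun x => by simpa using hψb x) ?_
      have : (fun x => c + ε * (fun y => -ψ y) x) = fun x => c - ε * ψ x := by
        funext x; ring
      rw [this]; exact hγ₂
    rw [integral_neg, integral_neg] at hge
    have hψQ : Integrable ψ Q := integrable_of_cb hψc hψb
    linarith [hle, neg_le_neg_iff.mp hge]
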